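/- arXiv:1705.06212 — 3 statements merged into one kernel-verified Lean document; each statement's English description precedes it below -/
import Mathlib

section
/- Let (C₀, C₁, C₂, C₃) be a Descartes configuration of circles in the complex plane, and let k₀, k₁, k₂, k₃ be their signed curvatures. Then (k₀ + k₁ + k₂ + k₃)² = 2(k₀² + k₁² + k₂² + k₃²). -/
/-- A circle in the complex plane: a center and a positive radius. -/
structure PCircle where
  center : ℂ
  radius : ℝ
  radius_pos : 0 < radius

/-- The circle `C(z,r)` as the set `{w : ℂ | |w - z| = r}`. -/
def PCircle.toSet (c : PCircle) : Set ℂ := Metric.sphere c.center c.radius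

/-- Two circles are externally tangent if the distance between their centers
equals the sum of their radii. -/
def ExtTangent (c d : PCircle) : Prop :=
  dist c.center d.center = c.radius + d.radius

/-- `IntTangent c d` : the circle `c` is internally tangent to the (larger) circle `d`. -/
def IntTangent (c d : PCircle) : Prop :=
  c.radius < d.radius ∧ dist c.center d.center = d.radius - c.radius

/-- Two circles are tangent if they are externally tangent or one is internally
tangent to the other. -/
def Tangent (c d : PCircle) : Prop :=
  ExtTangent c d ∨ IntTangent c d ∨ IntTangent d c

/-- `c` and `d` are tangent and `p` is a common point of the two circles
(hence the point of tangency). -/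
def TangentAt (c d : PCircle) (p : ℂ) : Prop :=
  Tangent c d ∧ p ∈ c.toSet ∧ p ∈ d.toSet

/-- `c` is internally tangent to `d` at the point `p`. -/
def IntTangentAt (c d : PCircle) (p : ℂ) : Prop :=
  IntTangent c d ∧ p ∈ c.toSet ∧ p ∈ d.toSet

/-- A Descartes configuration: four circles `C0, C1, C2, C3` such that
`C1, C2, C3` are pairwise externally tangent and each is internally tangent
to the bounding circle `C0`. -/
structure DescartesConfig where
  C0 : PCircle
  C1 : PCircle
  C2 : PCircle
  C3 : PCircle
  h12 : ExtTangent C1 C2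
  h13 : ExtTangent C1 C3
  h23 : ExtTangent C2 C3
  h10 : IntTangent C1 C0
  h20 : IntTangent C2 C0
  h30 : IntTangent C3 C0

/-- The Apollonian gasket generated by a Descartes configuration: the smallest
collection of circles containing the four generating circles and closed under
inscribing a circle tangent to three pairwise tangent members at three
distinct points. -/
inductive InGasket (D : DescartesConfig) : PCircle → Prop
  | base0 : InGasket D D.C0
  | base1 : InGasket D D.C1
  | base2 : InGasket D D.C2
  | base3 : InGasket D D.C3
  | fill (a b c C : PCircle) (p₁ p₂ p₃ : ℂ) :
      InGasket D a → InGasket D b → InGasket D c →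
      Tangent a b → Tangent a c → Tangent b c →
      p₁ ≠ p₂ → p₁ ≠ p₃ → p₂ ≠ p₃ →
      TangentAt C a p₁ → TangentAt C b p₂ → TangentAt C c p₃ →
      InGasket D C

open Classical in
/-- The signed curvature of a circle of the gasket generated by `D`:
`-1/r` for the bounding circle `C0`, and `1/r` for every other circle. -/
noncomputable def signedCurv (D : DescartesConfig) (c : PCircle) : ℝ :=
  if c = D.C0 then -(1 / c.radius) else 1 / c.radius

/-- The residual set of the gasket generated by `D`: the closed disk bounded by
`C0` minus the open disks bounded by the other circles of the gasket. -/
def residualSet (D : DescartesConfig) : Set ℂ :=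
  Metric.closedBall D.C0.center D.C0.radius \
    ⋃ c ∈ {c : PCircle | InGasket D c ∧ c ≠ D.C0}, Metric.ball c.center c.radius

/-!
Measured from the centre of `C₀`, the centres `vᵢ` of `C₁, C₂, C₃` satisfy `‖vᵢ‖ = r₀ - rᵢ` and
`‖vᵢ - vⱼ‖ = rᵢ + rⱼ`, which by polarization fix their Gram matrix. Three vectors in the plane are
linearly dependent, so this Gram determinant vanishes; and it factors as `4 (r₀ r₁ r₂ r₃)²` times
`(k₀ + k₁ + k₂ + k₃)² - 2 (k₀² + k₁² + k₂² + k₃²)`.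
-/

open Matrix Module

theorem Matrix.det_gram_eq_zero_of_finrank_lt {𝕜 E n : Type*} [RCLike 𝕜] [NormedAddCommGroup E]
    [InnerProductSpace 𝕜 E] [FiniteDimensional 𝕜 E] [Fintype n] [DecidableEq n] (v : n → E)
    (h : finrank 𝕜 E < Fintype.card n) : (gram 𝕜 v).det = 0 := by
  by_contra hdet
  exact h.not_ge (linearIndependent_of_det_gram_ne_zero hdet).fintype_card_le_finrank

lemma ExtTangent.norm_sub_center {c d : PCircle} (h : ExtTangent c d) :
    ‖c.center - d.center‖ = c.radius + d.radius := by
  rw [← dist_eq_norm]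
  exact h

lemma IntTangent.norm_sub_center {c d : PCircle} (h : IntTangent c d) :
    ‖c.center - d.center‖ = d.radius - c.radius := by
  rw [← dist_eq_norm]
  exact h.2

lemma inner_sub_center_of_tangent {a b c : PCircle} (hab : ExtTangent a b) (ha : IntTangent a c)
    (hb : IntTangent b c) :
    inner ℝ (a.center - c.center) (b.center - c.center) =
      c.radius ^ 2 - c.radius * a.radius - c.radius * b.radius - a.radius * b.radius := by
  have h := norm_sub_sq_real (a.center - c.center) (b.center - c.center)
  rw [sub_sub_sub_cancel_right, hab.norm_sub_center, ha.norm_sub_center, hb.norm_sub_center] at h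
  linear_combination h / 2

def descartesGram (r₀ r₁ r₂ r₃ : ℝ) : Matrix (Fin 3) (Fin 3) ℝ :=
  !![(r₀ - r₁) ^ 2, r₀ ^ 2 - r₀ * r₁ - r₀ * r₂ - r₁ * r₂, r₀ ^ 2 - r₀ * r₁ - r₀ * r₃ - r₁ * r₃;
     r₀ ^ 2 - r₀ * r₁ - r₀ * r₂ - r₁ * r₂, (r₀ - r₂) ^ 2, r₀ ^ 2 - r₀ * r₂ - r₀ * r₃ - r₂ * r₃;
     r₀ ^ 2 - r₀ * r₁ - r₀ * r₃ - r₁ * r₃, r₀ ^ 2 - r₀ * r₂ - r₀ * r₃ - r₂ * r₃, (r₀ - r₃) ^ 2]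

lemma det_descartesGram {r₀ r₁ r₂ r₃ : ℝ} (h₀ : r₀ ≠ 0) (h₁ : r₁ ≠ 0) (h₂ : r₂ ≠ 0)
    (h₃ : r₃ ≠ 0) :
    (descartesGram r₀ r₁ r₂ r₃).det = 4 * (r₀ * r₁ * r₂ * r₃) ^ 2 *
      ((-(1 / r₀) + 1 / r₁ + 1 / r₂ + 1 / r₃) ^ 2 -
        2 * ((-(1 / r₀)) ^ 2 + (1 / r₁) ^ 2 + (1 / r₂) ^ 2 + (1 / r₃) ^ 2)) := by
  rw [descartesGram, det_fin_three]
  simp only [of_apply, cons_val', cons_val_zero, cons_val_one, cons_val_two, empty_val',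
    cons_val_fin_one, head_cons, tail_cons, head_fin_const]
  field_simp
  ring

lemma DescartesConfig.gram_sub_center (D : DescartesConfig) :
    gram ℝ ![D.C1.center - D.C0.center, D.C2.center - D.C0.center, D.C3.center - D.C0.center] =
      descartesGram D.C0.radius D.C1.radius D.C2.radius D.C3.radius := by
  ext i j
  fin_cases i <;> fin_cases j <;>
    simp [gram_apply, descartesGram, real_inner_comm,
      D.h10.norm_sub_center, D.h20.norm_sub_center, D.h30.norm_sub_center,
      inner_sub_center_of_tangent D.h12 D.h10 D.h20, inner_sub_center_of_tangent D.h13 D.h10 D.h30,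
      inner_sub_center_of_tangent D.h23 D.h20 D.h30]

/-- **Descartes' circle theorem.** If `(C₀, C₁, C₂, C₃)` is a Descartes
configuration with signed curvatures `k₀ = -1/r₀`, `kᵢ = 1/rᵢ` (i = 1,2,3),
then `(k₀ + k₁ + k₂ + k₃)² = 2(k₀² + k₁² + k₂² + k₃²)`. -/
theorem descartes_circle_theorem (D : DescartesConfig)
    (k₀ k₁ k₂ k₃ : ℝ)
    (hk₀ : k₀ = -(1 / D.C0.radius))
    (hk₁ : k₁ = 1 / D.C1.radius)
    (hk₂ : k₂ = 1 / D.C2.radius)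
    (hk₃ : k₃ = 1 / D.C3.radius) :
    (k₀ + k₁ + k₂ + k₃) ^ 2 = 2 * (k₀ ^ 2 + k₁ ^ 2 + k₂ ^ 2 + k₃ ^ 2) := by
  have hr₀ := D.C0.radius_pos
  have hr₁ := D.C1.radius_pos
  have hr₂ := D.C2.radius_pos
  have hr₃ := D.C3.radius_pos
  have hdet := det_gram_eq_zero_of_finrank_lt (𝕜 := ℝ)
    ![D.C1.center - D.C0.center, D.C2.center - D.C0.center, D.C3.center - D.C0.center]
    (by simp [Complex.finrank_real_complex])
  rw [D.gram_sub_center, det_descartesGram hr₀.ne' hr₁.ne' hr₂.ne' hr₃.ne'] at hdet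
  have hprod : 4 * (D.C0.radius * D.C1.radius * D.C2.radius * D.C3.radius) ^ 2 ≠ 0 := by
    positivity
  subst hk₀ hk₁ hk₂ hk₃
  linear_combination (mul_eq_zero.mp hdet).resolve_left hprod
end

section
/- There exists a Descartes configuration (C₀, C₁, C₂, C₃) such that every circle in the Apollonian gasket P generated by it has integer signed curvature. (For instance, the configuration with signed curvatures (-1, 2, 2, 3) has this property.) -/
/-!
Give a circle with centre `z` and radius `r` the vector
`acc = (1 / r, (|z|² - r²) / r, Re z / r, Im z / r)` (augmented curvature-centre coordinates;
the bounding circle gets curvature `1 / r` as well). For the Lorentz form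
`B v w = v₂ w₂ + v₃ w₃ - (v₀ w₁ + v₁ w₀) / 2` every `acc` has `B acc acc = 1`, and
`B (acc c) (acc d) = (r² + r'² - |z - z'|²) / (2 r r')` is `-1` or `1` for tangent circles.

Let `C` touch pairwise tangent circles `a, b, c` at distinct points. Flip the signs of their
vectors so that `acc C + vᵢ` is a multiple of the null vector of the point of contact; two such
null vectors are orthogonal only when the points coincide, which forces `B vᵢ vⱼ = -1`. So the
four vectors have Gram matrix `2I - J`, and then `acc C = v₁ + v₂ + v₃ ± n / 2` with `n` the
Lorentz cross product of `v₁, v₂, v₃`. Both `n / 2` and the sum are integral when the `vᵢ` are,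
so integrality of `acc` spreads from the configuration of curvatures `(-1, 2, 2, 3)` to its
whole gasket, and the signed curvature of `c` is `± acc c 0`.
-/

theorem Complex.dist_sq_eq_re_im (z w : ℂ) :
    dist z w ^ 2 = (z.re - w.re) ^ 2 + (z.im - w.im) ^ 2 := by
  rw [Complex.dist_eq, Complex.sq_norm, Complex.normSq_apply, Complex.sub_re, Complex.sub_im]
  ring

theorem Complex.dist_eq_of_sq_re_im {z w : ℂ} {d : ℝ} (hd : 0 ≤ d)
    (h : (z.re - w.re) ^ 2 + (z.im - w.im) ^ 2 = d ^ 2) : dist z w = d := by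
  rw [Complex.dist_eq_re_im, h, Real.sqrt_sq hd]

noncomputable def lorentz : LinearMap.BilinForm ℝ (Fin 4 → ℝ) :=
  LinearMap.mk₂ ℝ (fun v w => v 2 * w 2 + v 3 * w 3 - (v 0 * w 1 + v 1 * w 0) / 2)
    (fun _ _ _ => by simp only [Pi.add_apply]; ring)
    (fun _ _ _ => by simp only [Pi.smul_apply, smul_eq_mul]; ring)
    (fun _ _ _ => by simp only [Pi.add_apply]; ring)
    (fun _ _ _ => by simp only [Pi.smul_apply, smul_eq_mul]; ring)

theorem lorentz_apply (v w : Fin 4 → ℝ) :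
    lorentz v w = v 2 * w 2 + v 3 * w 3 - (v 0 * w 1 + v 1 * w 0) / 2 := rfl

theorem lorentz_comm (v w : Fin 4 → ℝ) : lorentz v w = lorentz w v := by
  simp only [lorentz_apply]; ring

/-- `lorentz (cross a b c) w = -det (a, b, c, w)`. -/
def cross (a b c : Fin 4 → ℝ) : Fin 4 → ℝ :=
  ![2 * !![a 0, a 2, a 3; b 0, b 2, b 3; c 0, c 2, c 3].det,
    -2 * !![a 1, a 2, a 3; b 1, b 2, b 3; c 1, c 2, c 3].det,
    !![a 0, a 1, a 3; b 0, b 1, b 3; c 0, c 1, c 3].det,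
    -!![a 0, a 1, a 2; b 0, b 1, b 2; c 0, c 1, c 2].det]

theorem lorentz_cross_self (a b c : Fin 4 → ℝ) :
    lorentz (cross a b c) (cross a b c) = -4 * !![lorentz a a, lorentz a b, lorentz a c;
      lorentz b a, lorentz b b, lorentz b c; lorentz c a, lorentz c b, lorentz c c].det := by
  simp only [lorentz_apply, cross, Matrix.det_fin_three, Matrix.of_apply, Matrix.cons_val',
    Matrix.cons_val_zero, Matrix.cons_val_one, Matrix.cons_val, Matrix.cons_val_fin_one]
  ring

/-- Expansion of `d` in the basis dual to `a, b, c, n`. -/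
theorem lorentz_cross_smul_eq (a b c n d : Fin 4 → ℝ) :
    lorentz (cross a b c) n • d = lorentz d n • cross a b c - lorentz d a • cross b c n
      - lorentz d b • cross c a n - lorentz d c • cross a b n := by
  ext i
  fin_cases i <;>
  · simp only [lorentz_apply, cross, Matrix.det_fin_three, Matrix.of_apply, Matrix.cons_val',
      Matrix.cons_val_zero, Matrix.cons_val_one, Matrix.cons_val, Matrix.cons_val_fin_one,
      Pi.sub_apply, Pi.smul_apply, smul_eq_mul, Fin.zero_eta, Fin.mk_one, Fin.reduceFinMk]
    ring

theorem eq_add_half_cross_or_eq_sub_half_cross {a b c u : Fin 4 → ℝ}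
    (haa : lorentz a a = 1) (hbb : lorentz b b = 1) (hcc : lorentz c c = 1)
    (hab : lorentz a b = -1) (hac : lorentz a c = -1) (hbc : lorentz b c = -1)
    (huu : lorentz u u = 1) (hua : lorentz u a = -1) (hub : lorentz u b = -1)
    (huc : lorentz u c = -1) :
    u = a + b + c + (1 / 2 : ℝ) • cross a b c ∨ u = a + b + c - (1 / 2 : ℝ) • cross a b c := by
  set n := cross a b c with hn
  set q := u - (a + b + c) with hq
  have hba := lorentz_comm b a
  have hca := lorentz_comm c a
  have hcb := lorentz_comm c b
  have hqa : lorentz q a = 0 := by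
    simp only [hq, map_sub, map_add, LinearMap.sub_apply, LinearMap.add_apply]; linarith
  have hqb : lorentz q b = 0 := by
    simp only [hq, map_sub, map_add, LinearMap.sub_apply, LinearMap.add_apply]; linarith
  have hqc : lorentz q c = 0 := by
    simp only [hq, map_sub, map_add, LinearMap.sub_apply, LinearMap.add_apply]; linarith
  have hqq : lorentz q q = 4 := by
    simp only [hq, map_sub, map_add, LinearMap.sub_apply, LinearMap.add_apply,
      lorentz_comm a u, lorentz_comm b u, lorentz_comm c u]
    linarith
  have hnn : lorentz n n = 16 := by
    rw [hn, lorentz_cross_self, Matrix.det_fin_three]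
    simp only [haa, hbb, hcc, hab, hac, hbc, hba, hca, hcb, Matrix.of_apply, Matrix.cons_val',
      Matrix.cons_val_zero, Matrix.cons_val_one, Matrix.cons_val, Matrix.cons_val_fin_one]
    norm_num
  have hqn : q = (lorentz q n / 16) • n := by
    have h := lorentz_cross_smul_eq a b c n q
    rw [← hn, hnn, hqa, hqb, hqc] at h
    simp only [zero_smul, sub_zero] at h
    rw [div_eq_inv_mul, mul_smul, ← h, smul_smul]
    norm_num
  have hτ : (lorentz q n / 16) ^ 2 = (1 / 2) ^ 2 := by
    have h := hqq
    rw [hqn] at h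
    simp only [map_smul, LinearMap.smul_apply, smul_eq_mul, hnn] at h
    linarith
  have hu : u = a + b + c + (lorentz q n / 16) • n := by
    rw [← sub_eq_iff_eq_add', ← hqn]
  rcases sq_eq_sq_iff_eq_or_eq_neg.mp hτ with h | h
  · exact .inl (by rw [hu, h])
  · exact .inr (by rw [hu, h, neg_smul, ← sub_eq_add_neg])

/-- The limit of `r • acc` for circles of radius `r → 0` centred at `p`. -/
def pointAcc (p : ℂ) : Fin 4 → ℝ := ![1, Complex.normSq p, p.re, p.im]

theorem lorentz_pointAcc (p q : ℂ) :
    lorentz (pointAcc p) (pointAcc q) = -dist p q ^ 2 / 2 := by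
  rw [Complex.dist_sq_eq_re_im]
  simp only [pointAcc, Complex.normSq_apply, lorentz_apply, Matrix.cons_val,
    Matrix.cons_val_zero, Matrix.cons_val_one]
  ring

theorem lorentz_eq_neg_one_of_add_eq_smul_pointAcc {u v : Fin 4 → ℝ} {l : ℝ} {p : ℂ}
    (huu : lorentz u u = 1) (hvv : lorentz v v = 1) (h : u + v = l • pointAcc p) :
    lorentz u v = -1 := by
  have h0 := congrArg (fun w => lorentz w w) h
  simp only [map_add, map_smul, LinearMap.add_apply, LinearMap.smul_apply, smul_eq_mul,
    lorentz_pointAcc, dist_self] at h0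
  rw [lorentz_comm v u] at h0
  linarith

theorem lorentz_ne_one_of_add_eq_smul_pointAcc {u v w : Fin 4 → ℝ} {l m : ℝ} {p q : ℂ}
    (huu : lorentz u u = 1) (huv : lorentz u v = -1) (huw : lorentz u w = -1)
    (hv : u + v = l • pointAcc p) (hw : u + w = m • pointAcc q) (hl : l ≠ 0) (hm : m ≠ 0)
    (hpq : p ≠ q) : lorentz v w ≠ 1 := by
  intro hvw
  have h0 := congrArg₂ (fun x y => lorentz x y) hv hw
  simp only [map_add, map_smul, LinearMap.add_apply, LinearMap.smul_apply, smul_eq_mul,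
    lorentz_pointAcc] at h0
  rw [lorentz_comm v u] at h0
  have : l * m * dist p q ^ 2 = 0 := by linarith
  simp [hl, hm, hpq] at this

namespace PCircle

noncomputable def acc (c : PCircle) : Fin 4 → ℝ :=
  ![1 / c.radius, (Complex.normSq c.center - c.radius ^ 2) / c.radius,
    c.center.re / c.radius, c.center.im / c.radius]

theorem lorentz_acc_acc (c d : PCircle) :
    lorentz c.acc d.acc =
      (c.radius ^ 2 + d.radius ^ 2 - dist c.center d.center ^ 2) / (2 * c.radius * d.radius) := by
  have := c.radius_pos.ne'
  have := d.radius_pos.ne'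
  rw [Complex.dist_sq_eq_re_im]
  simp only [acc, Complex.normSq_apply, lorentz_apply, Matrix.cons_val, Matrix.cons_val_zero,
    Matrix.cons_val_one]
  field_simp
  ring

theorem lorentz_acc_self (c : PCircle) : lorentz c.acc c.acc = 1 := by
  rw [lorentz_acc_acc, dist_self]
  field_simp [c.radius_pos.ne']
  ring

theorem acc_add_smul_acc_eq {c d : PCircle} {p : ℂ} {s : ℝ} (hc : p ∈ c.toSet)
    (hd : p ∈ d.toSet) (h : d.radius • (p - c.center) = (s * c.radius) • (d.center - p)) :
    c.acc + s • d.acc = (1 / c.radius + s / d.radius) • pointAcc p := by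
  have := c.radius_pos.ne'
  have := d.radius_pos.ne'
  have hc2 := congrArg (· ^ 2) (Metric.mem_sphere.mp hc)
  have hd2 := congrArg (· ^ 2) (Metric.mem_sphere.mp hd)
  simp only [Complex.dist_sq_eq_re_im] at hc2 hd2
  have hre := congrArg Complex.re h
  have him := congrArg Complex.im h
  simp only [Complex.real_smul, Complex.mul_re, Complex.mul_im, Complex.ofReal_re,
    Complex.ofReal_im, Complex.sub_re, Complex.sub_im, zero_mul, sub_zero, add_zero] at hre him
  ext i
  fin_cases i <;>
    simp only [acc, pointAcc, Complex.normSq_apply, Pi.add_apply, Pi.smul_apply, smul_eq_mul,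
      Matrix.cons_val, Matrix.cons_val_zero, Matrix.cons_val_one, Fin.zero_eta, Fin.mk_one,
      Fin.reduceFinMk] <;>
    field_simp
  · linear_combination d.radius * hc2 + s * c.radius * hd2 - 2 * p.re * hre - 2 * p.im * him
  · linear_combination -hre
  · linear_combination -him

end PCircle

theorem Tangent.lorentz_acc {c d : PCircle} (h : Tangent c d) :
    lorentz c.acc d.acc = -1 ∨ lorentz c.acc d.acc = 1 := by
  have := c.radius_pos.ne'
  have := d.radius_pos.ne'
  rw [PCircle.lorentz_acc_acc]
  rcases h with h | h | h
  · left; rw [h]; field_simp; ring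
  · right; rw [h.2]; field_simp; ring
  · right; rw [dist_comm, h.2]; field_simp; ring

theorem Tangent.lorentz_of_eq_or_eq_neg {u v : Fin 4 → ℝ} {c d : PCircle} (h : Tangent c d)
    (hu : u = c.acc ∨ u = -c.acc) (hv : v = d.acc ∨ v = -d.acc) :
    lorentz u v = -1 ∨ lorentz u v = 1 := by
  rcases hu with rfl | rfl <;> rcases hv with rfl | rfl <;>
    rcases h.lorentz_acc with h | h <;> simp [h]

theorem lorentz_self_of_eq_or_eq_neg {v : Fin 4 → ℝ} {c : PCircle} (h : v = c.acc ∨ v = -c.acc) :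
    lorentz v v = 1 := by
  rcases h with rfl | rfl <;> simp [PCircle.lorentz_acc_self]

theorem TangentAt.exists_smul_sub_eq {c d : PCircle} {p : ℂ} (h : TangentAt c d p) :
    ∃ s : ℝ, (s = 1 ∨ s = -1) ∧ 1 / c.radius + s / d.radius ≠ 0 ∧
      d.radius • (p - c.center) = (s * c.radius) • (d.center - p) := by
  -- equality in the triangle inequality: the point of contact lies on the line of centres
  obtain ⟨ht, hc, hd⟩ := h
  have hc : ‖p - c.center‖ = c.radius := by simpa [PCircle.toSet, dist_eq_norm] using hc
  have hd : ‖p - d.center‖ = d.radius := by simpa [PCircle.toSet, dist_eq_norm] using hd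
  have hrc := c.radius_pos
  have hrd := d.radius_pos
  rcases ht with ht | ht | ht
  · have key := (norm_add_eq_iff_real (x := p - c.center) (y := d.center - p)).mp (by
      rw [sub_add_sub_cancel', ← dist_eq_norm, dist_comm, ht, hc, norm_sub_rev, hd])
    rw [norm_sub_rev, hd, hc] at key
    exact ⟨1, .inl rfl, by positivity, by rwa [one_mul]⟩
  · have key := (norm_add_eq_iff_real (x := p - c.center) (y := c.center - d.center)).mp (by
      rw [sub_add_sub_cancel, ← dist_eq_norm c.center, ht.2, hc, hd]; ring)
    rw [← dist_eq_norm, ht.2, hc] at key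
    refine ⟨-1, .inr rfl, ?_, by linear_combination (norm := module) key⟩
    have := one_div_lt_one_div_of_lt hrc ht.1
    intro h; rw [neg_div] at h; linarith
  · have key := (norm_add_eq_iff_real (x := p - d.center) (y := d.center - c.center)).mp (by
      rw [sub_add_sub_cancel, ← dist_eq_norm d.center, ht.2, hc, hd]; ring)
    rw [← dist_eq_norm, ht.2, hd] at key
    refine ⟨-1, .inr rfl, ?_, by linear_combination (norm := module) -key⟩
    have := one_div_lt_one_div_of_lt hrd ht.1
    intro h; rw [neg_div] at h; linarith

theorem TangentAt.exists_acc_add_eq_smul_pointAcc {c d : PCircle} {p : ℂ} (h : TangentAt c d p) :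
    ∃ v, (v = d.acc ∨ v = -d.acc) ∧ ∃ l : ℝ, l ≠ 0 ∧ c.acc + v = l • pointAcc p := by
  obtain ⟨s, hs, hl, hsp⟩ := h.exists_smul_sub_eq
  refine ⟨s • d.acc, by rcases hs with rfl | rfl <;> simp, _, hl, ?_⟩
  exact PCircle.acc_add_smul_acc_eq h.2.1 h.2.2 hsp

def IsIntegralVec (v : Fin 4 → ℝ) : Prop := ∃ w : Fin 4 → ℤ, v = fun i => (w i : ℝ)

namespace IsIntegralVec

variable {u v : Fin 4 → ℝ}

theorem add (hu : IsIntegralVec u) (hv : IsIntegralVec v) : IsIntegralVec (u + v) := by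
  obtain ⟨a, rfl⟩ := hu
  obtain ⟨b, rfl⟩ := hv
  exact ⟨a + b, by ext; simp⟩

theorem neg (hu : IsIntegralVec u) : IsIntegralVec (-u) := by
  obtain ⟨a, rfl⟩ := hu
  exact ⟨-a, by ext; simp⟩

theorem sub (hu : IsIntegralVec u) (hv : IsIntegralVec v) : IsIntegralVec (u - v) :=
  sub_eq_add_neg u v ▸ hu.add hv.neg

theorem of_eq_or_eq_neg (hv : IsIntegralVec v) (h : u = v ∨ u = -v) : IsIntegralVec u := by
  rcases h with rfl | rfl
  exacts [hv, hv.neg]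

theorem half_smul_cross {a b c : Fin 4 → ℝ} (ha : IsIntegralVec a) (hb : IsIntegralVec b)
    (hc : IsIntegralVec c) (hab : lorentz a b = -1) (hac : lorentz a c = -1)
    (hbc : lorentz b c = -1) : IsIntegralVec ((1 / 2 : ℝ) • cross a b c) := by
  obtain ⟨a, rfl⟩ := ha
  obtain ⟨b, rfl⟩ := hb
  obtain ⟨c, rfl⟩ := hc
  rw [lorentz_apply] at hab hac hbc
  -- `k e' + e k' = 2 (x x' + y y' + 1)` for each pair makes the last two entries of `cross` even
  refine ⟨![!![a 0, a 2, a 3; b 0, b 2, b 3; c 0, c 2, c 3].det,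
    -!![a 1, a 2, a 3; b 1, b 2, b 3; c 1, c 2, c 3].det,
    c 3 * (a 2 * b 2 + a 3 * b 3 + 1 - b 0 * a 1) - b 3 * (a 2 * c 2 + a 3 * c 3 + 1 - c 0 * a 1)
      + a 3 * (b 2 * c 2 + b 3 * c 3 + 1 - c 0 * b 1),
    -(c 2 * (a 2 * b 2 + a 3 * b 3 + 1 - b 0 * a 1) - b 2 * (a 2 * c 2 + a 3 * c 3 + 1 - c 0 * a 1)
      + a 2 * (b 2 * c 2 + b 3 * c 3 + 1 - c 0 * b 1))], ?_⟩
  ext i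
  fin_cases i <;>
    simp only [cross, Matrix.det_fin_three, Matrix.of_apply, Matrix.cons_val',
      Matrix.cons_val_zero, Matrix.cons_val_one, Matrix.cons_val, Matrix.cons_val_fin_one,
      Pi.smul_apply, smul_eq_mul, Fin.zero_eta, Fin.mk_one, Fin.reduceFinMk, Int.cast_add,
      Int.cast_sub, Int.cast_mul, Int.cast_neg, Int.cast_one]
  · ring
  · ring
  · linear_combination -c 3 * hab + b 3 * hac - a 3 * hbc
  · linear_combination c 2 * hab - b 2 * hac + a 2 * hbc

end IsIntegralVec

theorem isIntegralVec_acc_of_tangentAt {a b c C : PCircle} {p₁ p₂ p₃ : ℂ}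
    (ha : IsIntegralVec a.acc) (hb : IsIntegralVec b.acc) (hc : IsIntegralVec c.acc)
    (hab : Tangent a b) (hac : Tangent a c) (hbc : Tangent b c)
    (h₁₂ : p₁ ≠ p₂) (h₁₃ : p₁ ≠ p₃) (h₂₃ : p₂ ≠ p₃)
    (hCa : TangentAt C a p₁) (hCb : TangentAt C b p₂) (hCc : TangentAt C c p₃) :
    IsIntegralVec C.acc := by
  obtain ⟨u, hu, l₁, hl₁, hCu⟩ := hCa.exists_acc_add_eq_smul_pointAcc
  obtain ⟨v, hv, l₂, hl₂, hCv⟩ := hCb.exists_acc_add_eq_smul_pointAcc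
  obtain ⟨w, hw, l₃, hl₃, hCw⟩ := hCc.exists_acc_add_eq_smul_pointAcc
  have hCC := C.lorentz_acc_self
  have huu := lorentz_self_of_eq_or_eq_neg hu
  have hvv := lorentz_self_of_eq_or_eq_neg hv
  have hww := lorentz_self_of_eq_or_eq_neg hw
  have hCu' := lorentz_eq_neg_one_of_add_eq_smul_pointAcc hCC huu hCu
  have hCv' := lorentz_eq_neg_one_of_add_eq_smul_pointAcc hCC hvv hCv
  have hCw' := lorentz_eq_neg_one_of_add_eq_smul_pointAcc hCC hww hCw
  have huv := (hab.lorentz_of_eq_or_eq_neg hu hv).resolve_right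
    (lorentz_ne_one_of_add_eq_smul_pointAcc hCC hCu' hCv' hCu hCv hl₁ hl₂ h₁₂)
  have huw := (hac.lorentz_of_eq_or_eq_neg hu hw).resolve_right
    (lorentz_ne_one_of_add_eq_smul_pointAcc hCC hCu' hCw' hCu hCw hl₁ hl₃ h₁₃)
  have hvw := (hbc.lorentz_of_eq_or_eq_neg hv hw).resolve_right
    (lorentz_ne_one_of_add_eq_smul_pointAcc hCC hCv' hCw' hCv hCw hl₂ hl₃ h₂₃)
  have hsum := ((ha.of_eq_or_eq_neg hu).add (hb.of_eq_or_eq_neg hv)).add (hc.of_eq_or_eq_neg hw)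
  have hcross := IsIntegralVec.half_smul_cross (ha.of_eq_or_eq_neg hu) (hb.of_eq_or_eq_neg hv)
    (hc.of_eq_or_eq_neg hw) huv huw hvw
  rcases eq_add_half_cross_or_eq_sub_half_cross huu hvv hww huv huw hvw hCC hCu' hCv' hCw'
    with h | h <;> rw [h]
  exacts [hsum.add hcross, hsum.sub hcross]

theorem InGasket.isIntegralVec_acc {D : DescartesConfig} (h₀ : IsIntegralVec D.C0.acc)
    (h₁ : IsIntegralVec D.C1.acc) (h₂ : IsIntegralVec D.C2.acc) (h₃ : IsIntegralVec D.C3.acc)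
    {c : PCircle} (hc : InGasket D c) : IsIntegralVec c.acc := by
  induction hc with
  | base0 => exact h₀
  | base1 => exact h₁
  | base2 => exact h₂
  | base3 => exact h₃
  | fill _ _ _ _ _ _ _ _ _ _ hab hac hbc h₁₂ h₁₃ h₂₃ hCa hCb hCc iha ihb ihc =>
    exact isIntegralVec_acc_of_tangentAt iha ihb ihc hab hac hbc h₁₂ h₁₃ h₂₃ hCa hCb hCc

theorem exists_signedCurv_eq_intCast (D : DescartesConfig) {c : PCircle}
    (hc : IsIntegralVec c.acc) : ∃ k : ℤ, signedCurv D c = k := by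
  obtain ⟨w, hw⟩ := hc
  have h₀ : 1 / c.radius = w 0 := congrFun hw 0
  unfold signedCurv
  split_ifs
  · exact ⟨-w 0, by rw [h₀, Int.cast_neg]⟩
  · exact ⟨w 0, h₀⟩

noncomputable def descartesNeg1223 : DescartesConfig where
  C0 := ⟨0, 1, one_pos⟩
  C1 := ⟨⟨-1 / 2, 0⟩, 1 / 2, by norm_num⟩
  C2 := ⟨⟨1 / 2, 0⟩, 1 / 2, by norm_num⟩
  C3 := ⟨⟨0, 2 / 3⟩, 1 / 3, by norm_num⟩
  h12 := Complex.dist_eq_of_sq_re_im (by norm_num) (by norm_num)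
  h13 := Complex.dist_eq_of_sq_re_im (by norm_num) (by norm_num)
  h23 := Complex.dist_eq_of_sq_re_im (by norm_num) (by norm_num)
  h10 := ⟨by norm_num, Complex.dist_eq_of_sq_re_im (by norm_num) (by norm_num)⟩
  h20 := ⟨by norm_num, Complex.dist_eq_of_sq_re_im (by norm_num) (by norm_num)⟩
  h30 := ⟨by norm_num, Complex.dist_eq_of_sq_re_im (by norm_num) (by norm_num)⟩

/-- There exists a Descartes configuration whose generated Apollonian gasket
consists entirely of circles with integer signed curvature. -/
theorem exists_integral_apollonian_gasket :
    ∃ D : DescartesConfig, ∀ c : PCircle, InGasket D c → ∃ k : ℤ, signedCurv D c = k := by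
  refine ⟨descartesNeg1223, fun c hc => exists_signedCurv_eq_intCast _ (hc.isIntegralVec_acc
    ⟨![1, -1, 0, 0], ?_⟩ ⟨![2, 0, -1, 0], ?_⟩ ⟨![2, 0, 1, 0], ?_⟩ ⟨![3, 1, 0, 2], ?_⟩)⟩ <;>
  · ext i
    fin_cases i <;> norm_num [PCircle.acc, descartesNeg1223, Complex.normSq_apply]
end

section
/- Let 0 < θ₁ < θ₂ < 2π. Then there exists a unique Descartes configuration (C₀, C₁, C₂, C₃) in the complex plane such that C₀ is the unit circle {z ∈ ℂ : |z| = 1}, C₁ is internally tangent to C₀ at the point 1 = e^{0·i}, C₂ is internally tangent to C₀ at e^{iθ₁}, and C₃ is internally tangent to C₀ at e^{iθ₂}. -/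
/-! A circle of radius `r` internally tangent to the unit circle at a unit vector `p` has center
`(1 - r) p`. For two such circles, with radii `r`, `s` and tangency points `p`, `q`, the squared
distance of the centers is `(r - s)² + (1 - r)(1 - s)|p - q|²`, so they are externally tangent iff
`x y = (|p - q| / 2)²`, where `x = r / (1 - r)` and `y = s / (1 - s)`. With `a`, `b`, `c` half the
distances between the prescribed tangency points, the three external tangencies thus form the
system `x₁x₂ = a²`, `x₁x₃ = b²`, `x₂x₃ = c²`, whose only positive solution is `x₁ = ab/c`,
`x₂ = ac/b`, `x₃ = bc/a`; and `r ↦ r / (1 - r)` maps `(0, 1)` bijectively onto `(0, ∞)`. -/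

attribute [ext] PCircle DescartesConfig

theorem norm_smul_sub_smul_sq {E : Type*} [NormedAddCommGroup E] [InnerProductSpace ℝ E]
    {p q : E} (hp : ‖p‖ = 1) (hq : ‖q‖ = 1) (a b : ℝ) :
    ‖a • p - b • q‖ ^ 2 = (a - b) ^ 2 + a * b * ‖p - q‖ ^ 2 := by
  simp only [norm_sub_sq_real, norm_smul, inner_smul_left, inner_smul_right, hp, hq,
    Real.norm_eq_abs, mul_one, sq_abs, RCLike.conj_to_real]
  ring

theorem intTangentAt_iff {c d : PCircle} {p : ℂ} (hp : p ∈ d.toSet) :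
    IntTangentAt c d p ↔ c.radius < d.radius ∧
      d.radius • (c.center - d.center) = (d.radius - c.radius) • (p - d.center) := by
  rw [PCircle.toSet, mem_sphere_iff_norm] at hp
  have hc := c.radius_pos
  have hd := d.radius_pos
  simp only [IntTangentAt, IntTangent, PCircle.toSet, mem_sphere_iff_norm, hp, dist_eq_norm,
    and_true]
  constructor
  · rintro ⟨⟨hlt, hcd⟩, hpc⟩
    have hray : SameRay ℝ (p - c.center) (c.center - d.center) := by
      rw [sameRay_iff_norm_add, sub_add_sub_cancel, hp, hpc, hcd, add_sub_cancel]
    refine ⟨hlt, ?_⟩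
    have hsmul := hray.norm_smul_eq
    rw [hpc, hcd] at hsmul
    calc d.radius • (c.center - d.center)
        = c.radius • (c.center - d.center) + (d.radius - c.radius) • (c.center - d.center) := by
          module
      _ = (d.radius - c.radius) • (p - d.center) := by rw [hsmul]; module
  · rintro ⟨hlt, hcd⟩
    have hnorm := congrArg norm hcd
    rw [norm_smul, norm_smul, Real.norm_of_nonneg hd.le, Real.norm_of_nonneg (by linarith), hp]
      at hnorm
    have hpc : d.radius • (p - c.center) = c.radius • (p - d.center) := by
      linear_combination (norm := module) -hcd
    have hnorm' := congrArg norm hpc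
    rw [norm_smul, norm_smul, Real.norm_of_nonneg hd.le, Real.norm_of_nonneg hc.le, hp]
      at hnorm'
    exact ⟨⟨hlt, mul_left_cancel₀ hd.ne' (hnorm.trans (mul_comm _ _))⟩,
      mul_left_cancel₀ hd.ne' (hnorm'.trans (mul_comm _ _))⟩

theorem IntTangentAt.eq_of_radius_eq {c c' d : PCircle} {p : ℂ} (hc : IntTangentAt c d p)
    (hc' : IntTangentAt c' d p) (h : c.radius = c'.radius) : c = c' := by
  have e := (intTangentAt_iff hc.2.2).1 hc |>.2
  rw [h, ← (intTangentAt_iff hc'.2.2).1 hc' |>.2] at e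
  exact PCircle.ext (by simpa using smul_right_injective ℂ d.radius_pos.ne' e) h

theorem intTangentAt_unitCircle_iff {c d : PCircle} {p : ℂ} (hd₀ : d.center = 0)
    (hd₁ : d.radius = 1) (hp : ‖p‖ = 1) :
    IntTangentAt c d p ↔ c.radius < 1 ∧ c.center = (1 - c.radius) • p := by
  rw [intTangentAt_iff (by simp [PCircle.toSet, hd₀, hd₁, hp]), hd₀, hd₁]
  simp only [sub_zero, one_smul]

theorem extTangent_iff_of_intTangentAt_unitCircle {c c' d : PCircle} {p q : ℂ}
    (hd₀ : d.center = 0) (hd₁ : d.radius = 1) (hc : IntTangentAt c d p)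
    (hc' : IntTangentAt c' d q) :
    ExtTangent c c' ↔
      c.radius / (1 - c.radius) * (c'.radius / (1 - c'.radius)) = (‖p - q‖ / 2) ^ 2 := by
  have hp : ‖p‖ = 1 := by simpa [PCircle.toSet, hd₀, hd₁] using hc.2.2
  have hq : ‖q‖ = 1 := by simpa [PCircle.toSet, hd₀, hd₁] using hc'.2.2
  obtain ⟨hr, hcp⟩ := (intTangentAt_unitCircle_iff hd₀ hd₁ hp).1 hc
  obtain ⟨hr', hcq⟩ := (intTangentAt_unitCircle_iff hd₀ hd₁ hq).1 hc'
  have hr₀ := c.radius_pos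
  have hr₀' := c'.radius_pos
  rw [ExtTangent, ← sq_eq_sq₀ dist_nonneg (by positivity), dist_eq_norm, hcp, hcq,
    norm_smul_sub_smul_sq hp hq, div_mul_div_comm,
    div_eq_iff (mul_pos (sub_pos.2 hr) (sub_pos.2 hr')).ne']
  constructor <;> intro h
  · linear_combination -h / 4
  · linear_combination -4 * h

theorem exists_intTangentAt_unitCircle {d : PCircle} {p : ℂ} (hd₀ : d.center = 0)
    (hd₁ : d.radius = 1) (hp : ‖p‖ = 1) {u : ℝ} (hu : 0 < u) :
    ∃ c : PCircle, IntTangentAt c d p ∧ c.radius / (1 - c.radius) = u := by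
  have hr : u / (1 + u) < 1 := (div_lt_one (by positivity)).2 (by linarith)
  refine ⟨⟨(1 - u / (1 + u)) • p, u / (1 + u), by positivity⟩,
    (intTangentAt_unitCircle_iff hd₀ hd₁ hp).2 ⟨hr, rfl⟩, ?_⟩
  field_simp
  ring

theorem mul_eq_sq_iff_eq_div {x y z a b c : ℝ} (hx : 0 < x) (ha : 0 < a) (hb : 0 < b)
    (hc : 0 < c) :
    x * y = a ^ 2 ∧ x * z = b ^ 2 ∧ y * z = c ^ 2 ↔
      x = a * b / c ∧ y = a * c / b ∧ z = b * c / a := by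
  constructor
  · rintro ⟨hxy, hxz, hyz⟩
    have hxc : x * c = a * b := by
      refine (sq_eq_sq₀ (by positivity) (by positivity)).1 ?_
      linear_combination x * z * hxy + a ^ 2 * hxz - x ^ 2 * hyz
    have hyb : y * b = a * c := mul_left_cancel₀ hx.ne' (by linear_combination b * hxy - a * hxc)
    have hza : z * a = b * c := mul_left_cancel₀ hx.ne' (by linear_combination a * hxz - b * hxc)
    exact ⟨eq_div_of_mul_eq hc.ne' hxc, eq_div_of_mul_eq hb.ne' hyb, eq_div_of_mul_eq ha.ne' hza⟩
  · rintro ⟨rfl, rfl, rfl⟩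
    refine ⟨?_, ?_, ?_⟩ <;> field_simp

theorem div_one_sub_injOn : Set.InjOn (fun r : ℝ => r / (1 - r)) {1}ᶜ := by
  intro r hr s hs h
  have hr' : 1 - r ≠ 0 := sub_ne_zero.2 (Ne.symm hr)
  have hs' : 1 - s ≠ 0 := sub_ne_zero.2 (Ne.symm hs)
  rw [div_eq_div_iff hr' hs'] at h
  linarith

theorem Circle.half_norm_sub_pos {p q : Circle} (h : p ≠ q) : 0 < ‖(p - q : ℂ)‖ / 2 :=
  half_pos (norm_sub_pos_iff.2 (Circle.coe_injective.ne h))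

namespace DescartesConfig

def TouchesUnitCircleAt (D : DescartesConfig) (p₁ p₂ p₃ : ℂ) : Prop :=
  D.C0.center = 0 ∧ D.C0.radius = 1 ∧
    IntTangentAt D.C1 D.C0 p₁ ∧ IntTangentAt D.C2 D.C0 p₂ ∧ IntTangentAt D.C3 D.C0 p₃

variable {p₁ p₂ p₃ : Circle}

theorem exists_touchesUnitCircleAt (h₁₂ : p₁ ≠ p₂) (h₁₃ : p₁ ≠ p₃) (h₂₃ : p₂ ≠ p₃) :
    ∃ D : DescartesConfig, D.TouchesUnitCircleAt p₁ p₂ p₃ := by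
  set a := ‖(p₁ - p₂ : ℂ)‖ / 2
  set b := ‖(p₁ - p₃ : ℂ)‖ / 2
  set c := ‖(p₂ - p₃ : ℂ)‖ / 2
  have ha : 0 < a := Circle.half_norm_sub_pos h₁₂
  have hb : 0 < b := Circle.half_norm_sub_pos h₁₃
  have hc : 0 < c := Circle.half_norm_sub_pos h₂₃
  let C0 : PCircle := ⟨0, 1, one_pos⟩
  obtain ⟨C1, hT₁, hu₁⟩ := exists_intTangentAt_unitCircle (d := C0) rfl rfl p₁.norm_coe
    (by positivity : 0 < a * b / c)
  obtain ⟨C2, hT₂, hu₂⟩ := exists_intTangentAt_unitCircle (d := C0) rfl rfl p₂.norm_coe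
    (by positivity : 0 < a * c / b)
  obtain ⟨C3, hT₃, hu₃⟩ := exists_intTangentAt_unitCircle (d := C0) rfl rfl p₃.norm_coe
    (by positivity : 0 < b * c / a)
  obtain ⟨e₁₂, e₁₃, e₂₃⟩ :=
    (mul_eq_sq_iff_eq_div (by rw [hu₁]; positivity) ha hb hc).2 ⟨hu₁, hu₂, hu₃⟩
  exact ⟨⟨C0, C1, C2, C3,
    (extTangent_iff_of_intTangentAt_unitCircle rfl rfl hT₁ hT₂).2 e₁₂,
    (extTangent_iff_of_intTangentAt_unitCircle rfl rfl hT₁ hT₃).2 e₁₃,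
    (extTangent_iff_of_intTangentAt_unitCircle rfl rfl hT₂ hT₃).2 e₂₃,
    hT₁.1, hT₂.1, hT₃.1⟩, rfl, rfl, hT₁, hT₂, hT₃⟩

theorem TouchesUnitCircleAt.radius_div_one_sub_eq {D : DescartesConfig}
    (hD : D.TouchesUnitCircleAt p₁ p₂ p₃) (h₁₂ : p₁ ≠ p₂) (h₁₃ : p₁ ≠ p₃) (h₂₃ : p₂ ≠ p₃) :
    D.C1.radius / (1 - D.C1.radius) =
        ‖(p₁ - p₂ : ℂ)‖ / 2 * (‖(p₁ - p₃ : ℂ)‖ / 2) / (‖(p₂ - p₃ : ℂ)‖ / 2) ∧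
      D.C2.radius / (1 - D.C2.radius) =
        ‖(p₁ - p₂ : ℂ)‖ / 2 * (‖(p₂ - p₃ : ℂ)‖ / 2) / (‖(p₁ - p₃ : ℂ)‖ / 2) ∧
      D.C3.radius / (1 - D.C3.radius) =
        ‖(p₁ - p₃ : ℂ)‖ / 2 * (‖(p₂ - p₃ : ℂ)‖ / 2) / (‖(p₁ - p₂ : ℂ)‖ / 2) := by
  obtain ⟨h₀, h₁, hT₁, hT₂, hT₃⟩ := hD
  have hr₁ : 0 < D.C1.radius / (1 - D.C1.radius) :=
    div_pos D.C1.radius_pos (sub_pos.2 (hT₁.1.1.trans_eq h₁))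
  exact (mul_eq_sq_iff_eq_div hr₁ (Circle.half_norm_sub_pos h₁₂) (Circle.half_norm_sub_pos h₁₃)
    (Circle.half_norm_sub_pos h₂₃)).1
    ⟨(extTangent_iff_of_intTangentAt_unitCircle h₀ h₁ hT₁ hT₂).1 D.h12,
      (extTangent_iff_of_intTangentAt_unitCircle h₀ h₁ hT₁ hT₃).1 D.h13,
      (extTangent_iff_of_intTangentAt_unitCircle h₀ h₁ hT₂ hT₃).1 D.h23⟩

theorem TouchesUnitCircleAt.eq {D D' : DescartesConfig} (h₁₂ : p₁ ≠ p₂) (h₁₃ : p₁ ≠ p₃)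
    (h₂₃ : p₂ ≠ p₃) (hD : D.TouchesUnitCircleAt p₁ p₂ p₃)
    (hD' : D'.TouchesUnitCircleAt p₁ p₂ p₃) : D = D' := by
  obtain ⟨e₁, e₂, e₃⟩ := hD.radius_div_one_sub_eq h₁₂ h₁₃ h₂₃
  obtain ⟨e₁', e₂', e₃'⟩ := hD'.radius_div_one_sub_eq h₁₂ h₁₃ h₂₃
  obtain ⟨h₀, h₁, hT₁, hT₂, hT₃⟩ := hD
  obtain ⟨h₀', h₁', hT₁', hT₂', hT₃'⟩ := hD'
  have hC0 : D.C0 = D'.C0 := PCircle.ext (h₀.trans h₀'.symm) (h₁.trans h₁'.symm)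
  rw [← hC0] at hT₁' hT₂' hT₃'
  have key : ∀ {c c' : PCircle} {p : ℂ}, IntTangentAt c D.C0 p → IntTangentAt c' D.C0 p →
      c.radius / (1 - c.radius) = c'.radius / (1 - c'.radius) → c = c' :=
    fun hc hc' h => hc.eq_of_radius_eq hc'
      (div_one_sub_injOn (hc.1.1.trans_eq h₁).ne (hc'.1.1.trans_eq h₁).ne h)
  exact DescartesConfig.ext hC0 (key hT₁ hT₁' (e₁.trans e₁'.symm))
    (key hT₂ hT₂' (e₂.trans e₂'.symm)) (key hT₃ hT₃' (e₃.trans e₃'.symm))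

theorem existsUnique_touchesUnitCircleAt (h₁₂ : p₁ ≠ p₂) (h₁₃ : p₁ ≠ p₃) (h₂₃ : p₂ ≠ p₃) :
    ∃! D : DescartesConfig, D.TouchesUnitCircleAt p₁ p₂ p₃ :=
  existsUnique_of_exists_of_unique (exists_touchesUnitCircleAt h₁₂ h₁₃ h₂₃)
    fun _ _ => TouchesUnitCircleAt.eq h₁₂ h₁₃ h₂₃

end DescartesConfig

/-- For `0 < θ₁ < θ₂ < 2π` there is a unique Descartes configuration whose
bounding circle is the unit circle, with `C₁` internally tangent to `C₀` at
`1`, `C₂` at `e^{iθ₁}`, and `C₃` at `e^{iθ₂}`. -/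
theorem existsUnique_descartesConfig_of_tangency_points
    (θ₁ θ₂ : ℝ) (h₀ : 0 < θ₁) (h₁ : θ₁ < θ₂) (h₂ : θ₂ < 2 * Real.pi) :
    ∃! D : DescartesConfig,
      D.C0.center = 0 ∧ D.C0.radius = 1 ∧
      IntTangentAt D.C1 D.C0 1 ∧
      IntTangentAt D.C2 D.C0 (Complex.exp (θ₁ * Complex.I)) ∧
      IntTangentAt D.C3 D.C0 (Complex.exp (θ₂ * Complex.I)) := by
  have hinj := Circle.exp_injOn_Ico (a := 0) (b := 2 * Real.pi) (by simp)
  have h₁₂ : (1 : Circle) ≠ Circle.exp θ₁ := by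
    rw [← Circle.exp_zero]
    exact fun h => h₀.ne (hinj ⟨le_rfl, by positivity⟩ ⟨h₀.le, by linarith⟩ h)
  have h₁₃ : (1 : Circle) ≠ Circle.exp θ₂ := by
    rw [← Circle.exp_zero]
    exact fun h => (h₀.trans h₁).ne (hinj ⟨le_rfl, by positivity⟩ ⟨by linarith, h₂⟩ h)
  have h₂₃ : Circle.exp θ₁ ≠ Circle.exp θ₂ :=
    fun h => h₁.ne (hinj ⟨h₀.le, by linarith⟩ ⟨by linarith, h₂⟩ h)
  exact DescartesConfig.existsUnique_touchesUnitCircleAt h₁₂ h₁₃ h₂₃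
end
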